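/- arXiv:2305.16453 — 2 statements merged into one kernel-verified Lean document; each statement's English description precedes it below -/
import Mathlib

section
/- If T(z) = Σ_{n≥1} n^{n-1} z^n / n! satisfies T(z) = z·exp(T(z)) in a neighborhood of the origin, then T(1/e) = 1. -/
/-!
The coefficients satisfy `n^(n-1)/n! ≤ e^n`, so the series is analytic on `(-1/e, 1/e)`.
Near `0` the functional equation makes `T` a local inverse of `x ↦ x e^(-x)`, which is injective
on `(-∞, 1]`; by the identity theorem `T (x e^(-x)) = x` on all of `[0, 1)`. As `x ↑ 1`,
`x e^(-x) ↑ 1/e`, and since the coefficients are nonnegative the value of the series at `1/e` is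
the supremum of its values below `1/e`, which is `1`.
-/

open Real Filter Topology Set FormalMultilinearSeries
open scoped Nat

lemma mem_ball_zero_of_mem_Ico {r x : ℝ} (hx : x ∈ Ico 0 r) : x ∈ Metric.ball 0 r := by
  rw [Metric.mem_ball, dist_0_eq_abs, abs_of_nonneg hx.1]
  exact hx.2

theorem hasSum_mul_pow_of_isLUB {a : ℕ → ℝ} (ha : ∀ n, 0 ≤ a n) {R L : ℝ} {s : Set ℝ}
    (hs : s ⊆ Icc 0 R) (hR : R ∈ closure s) (hsum : ∀ r ∈ s, Summable fun n => a n * r ^ n)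
    (hL : IsLUB ((fun r => ∑' n, a n * r ^ n) '' s) L) :
    HasSum (fun n => a n * R ^ n) L := by
  have hR0 : 0 ≤ R := (closure_minimal hs isClosed_Icc hR).1
  have hnonneg : ∀ n, 0 ≤ a n * R ^ n := fun n => mul_nonneg (ha n) (pow_nonneg hR0 n)
  have partial_le : ∀ N, ∑ n ∈ Finset.range N, a n * R ^ n ≤ L := by
    intro N
    refine closure_minimal (fun r hr => ?_)
      (isClosed_le (f := fun r => ∑ n ∈ Finset.range N, a n * r ^ n) (by fun_prop)
        continuous_const) hR
    calc ∑ n ∈ Finset.range N, a n * r ^ n ≤ ∑' n, a n * r ^ n :=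
          (hsum r hr).sum_le_tsum _ fun n _ => mul_nonneg (ha n) (pow_nonneg (hs hr).1 n)
      _ ≤ L := hL.1 (mem_image_of_mem _ hr)
  have hsumR : Summable fun n => a n * R ^ n := summable_of_sum_range_le hnonneg partial_le
  have le_tsum : L ≤ ∑' n, a n * R ^ n := by
    refine hL.2 ?_
    rintro _ ⟨r, hr, rfl⟩
    exact (hsum r hr).tsum_le_tsum
      (fun n => mul_le_mul_of_nonneg_left (pow_le_pow_left₀ (hs hr).1 (hs hr).2 n) (ha n)) hsumR
  exact hsumR.hasSum_iff.mpr
    (le_antisymm (Real.tsum_le_of_sum_range_le hnonneg partial_le) le_tsum)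

noncomputable def mulExpNeg (x : ℝ) : ℝ := x * exp (-x)

lemma continuous_mulExpNeg : Continuous mulExpNeg := by
  unfold mulExpNeg; fun_prop

lemma analyticAt_mulExpNeg (x : ℝ) : AnalyticAt ℝ mulExpNeg x := by
  unfold mulExpNeg; fun_prop

lemma mulExpNeg_one : mulExpNeg 1 = (exp 1)⁻¹ := by
  rw [mulExpNeg, one_mul, exp_neg]

lemma hasDerivAt_mulExpNeg (x : ℝ) : HasDerivAt mulExpNeg ((1 - x) * exp (-x)) x := by
  rw [show (1 - x) * exp (-x) = 1 * exp (-x) + x * (exp (-x) * -1) by ring]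
  exact (hasDerivAt_id' x).mul (hasDerivAt_neg x).exp

lemma strictMonoOn_mulExpNeg : StrictMonoOn mulExpNeg (Iic 1) := by
  refine strictMonoOn_of_deriv_pos (convex_Iic 1) continuous_mulExpNeg.continuousOn
    fun x hx => ?_
  rw [interior_Iic, mem_Iio] at hx
  rw [(hasDerivAt_mulExpNeg x).deriv]
  exact mul_pos (by linarith) (exp_pos _)

lemma mulExpNeg_mem_Ico {x : ℝ} (hx : x ∈ Ico 0 1) : mulExpNeg x ∈ Ico 0 (exp 1)⁻¹ :=
  ⟨mul_nonneg hx.1 (exp_pos _).le,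
    mulExpNeg_one ▸ strictMonoOn_mulExpNeg hx.2.le self_mem_Iic hx.2⟩

lemma eventually_mulExpNeg_eq {T : ℝ → ℝ} (hc : ContinuousAt T 0)
    (heq : ∀ᶠ z in 𝓝 0, T z = z * exp (T z)) : ∀ᶠ x in 𝓝 0, T (mulExpNeg x) = x := by
  have hT0 : T 0 = 0 := by simpa using heq.self_of_nhds
  have hφ : Tendsto mulExpNeg (𝓝 0) (𝓝 0) := by
    simpa [mulExpNeg] using continuous_mulExpNeg.tendsto 0
  have hTφ : Tendsto (T ∘ mulExpNeg) (𝓝 0) (𝓝 0) := by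
    simpa only [hT0] using hc.tendsto.comp hφ
  filter_upwards [hφ.eventually heq, hTφ.eventually (Iic_mem_nhds one_pos),
    Iic_mem_nhds one_pos] with x hfix hT1 hx1
  refine strictMonoOn_mulExpNeg.injOn hT1 hx1 ?_
  rw [mulExpNeg, exp_neg, eq_comm, eq_mul_inv_iff_mul_eq₀ (exp_ne_zero _)]
  exact hfix.symm

lemma eqOn_comp_mulExpNeg {T : ℝ → ℝ} (hT : AnalyticOnNhd ℝ T (Metric.ball 0 (exp 1)⁻¹))
    (h : ∀ᶠ x in 𝓝 0, T (mulExpNeg x) = x) : EqOn (T ∘ mulExpNeg) id (Ico 0 1) :=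
  AnalyticOnNhd.eqOn_of_preconnected_of_eventuallyEq
    (fun x hx => (hT _ (mem_ball_zero_of_mem_Ico (mulExpNeg_mem_Ico hx))).comp
      (analyticAt_mulExpNeg x)) analyticOnNhd_id isPreconnected_Ico
    (left_mem_Ico.2 one_pos) h

noncomputable def treeCoeff : ℕ → ℝ
  | 0 => 0
  | n + 1 => (n + 1 : ℝ) ^ n / (n + 1)!

lemma treeCoeff_nonneg (n : ℕ) : 0 ≤ treeCoeff n := by
  cases n <;> simp only [treeCoeff] <;> positivity

lemma treeCoeff_le_exp_one_pow (n : ℕ) : treeCoeff n ≤ exp 1 ^ n := by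
  cases n with
  | zero => simp [treeCoeff]
  | succ n =>
    calc treeCoeff (n + 1) ≤ (n + 1 : ℝ) ^ (n + 1) / (n + 1)! := by
          show (n + 1 : ℝ) ^ n / (n + 1)! ≤ _
          gcongr
          · linarith
          · omega
      _ ≤ exp (n + 1) := by
          exact_mod_cast pow_div_factorial_le_exp (n + 1 : ℝ) (by positivity) (n + 1)
      _ = exp 1 ^ (n + 1) := by rw [← exp_nat_mul, mul_one]; push_cast; rfl

lemma summable_treeCoeff_mul_pow {r : ℝ} (hr : r ∈ Ico 0 (exp 1)⁻¹) :
    Summable fun n => treeCoeff n * r ^ n := by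
  have hq : exp 1 * r < 1 := by
    rw [← lt_div_iff₀' (exp_pos 1), one_div]; exact hr.2
  refine (summable_geometric_of_lt_one (mul_nonneg (exp_pos 1).le hr.1) hq).of_nonneg_of_le
    (fun n => mul_nonneg (treeCoeff_nonneg n) (pow_nonneg hr.1 n)) fun n => ?_
  rw [mul_pow]
  exact mul_le_mul_of_nonneg_right (treeCoeff_le_exp_one_pow n) (pow_nonneg hr.1 n)

lemma le_radius_ofScalars_treeCoeff :
    ENNReal.ofReal (exp 1)⁻¹ ≤ (ofScalars ℝ treeCoeff).radius := by
  refine le_radius_of_bound _ 1 fun n => ?_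
  rw [ofScalars_norm, norm_of_nonneg (treeCoeff_nonneg n), coe_toNNReal _ (by positivity),
    inv_pow, ← div_eq_mul_inv, div_le_one (by positivity)]
  exact treeCoeff_le_exp_one_pow n

lemma analyticOnNhd_tsum_treeCoeff_mul_pow :
    AnalyticOnNhd ℝ (fun z => ∑' n, treeCoeff n * z ^ n) (Metric.ball 0 (exp 1)⁻¹) := by
  have hr := le_radius_ofScalars_treeCoeff
  have hA := ((ofScalars ℝ treeCoeff).hasFPowerSeriesOnBall
    (hr.trans_lt' (by simp [exp_pos]))).analyticOnNhd
  rw [← Metric.eball_ofReal]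
  convert hA.mono (Metric.eball_subset_eball hr) using 1
  simp only [← ofScalarsSum.eq_1, ofScalarsSum_eq_tsum, smul_eq_mul]

lemma tsum_treeCoeff_mul_pow (z : ℝ) :
    ∑' n, treeCoeff n * z ^ n = ∑' n : ℕ, (n + 1 : ℝ) ^ n / (n + 1)! * z ^ (n + 1) := by
  refine (Nat.succ_injective.tsum_eq fun n hn => ?_).symm
  cases n with
  | zero => simp [treeCoeff] at hn
  | succ n => exact mem_range_self n

/-- If `T(z) = Σ_{n ≥ 1} n^(n-1) z^n / n!` satisfies `T(z) = z·exp(T(z))` in a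
neighbourhood of the origin, then `T(1/e) = 1`. The sum is indexed so that the
`n`-th summand (for `n : ℕ`) is the term for `n + 1`. -/
theorem tree_egf_at_inv_e
    (T : ℝ → ℝ)
    (hT : ∀ z : ℝ, T z = ∑' n : ℕ, ((n + 1 : ℝ) ^ n / (Nat.factorial (n + 1))) * z ^ (n + 1))
    (heq : ∃ ε > 0, ∀ z : ℝ, |z| < ε → T z = z * Real.exp (T z)) :
    T (Real.exp 1)⁻¹ = 1 := by
  have hT' : T = fun z => ∑' n, treeCoeff n * z ^ n :=
    funext fun z => (hT z).trans (tsum_treeCoeff_mul_pow z).symm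
  have hA : AnalyticOnNhd ℝ T (Metric.ball 0 (exp 1)⁻¹) :=
    hT' ▸ analyticOnNhd_tsum_treeCoeff_mul_pow
  have hinv : EqOn (T ∘ mulExpNeg) id (Ico 0 1) :=
    eqOn_comp_mulExpNeg hA (eventually_mulExpNeg_eq (hA 0 (by simp [exp_pos])).continuousAt
      (Metric.eventually_nhds_iff.2 (by simpa only [dist_0_eq_abs] using heq)))
  have hsum : HasSum (fun n => treeCoeff n * (exp 1)⁻¹ ^ n) 1 := by
    refine hasSum_mul_pow_of_isLUB treeCoeff_nonneg (s := mulExpNeg '' Ico 0 1) ?_ ?_ ?_ ?_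
    · rintro _ ⟨x, hx, rfl⟩
      exact Ico_subset_Icc_self (mulExpNeg_mem_Ico hx)
    · rw [← mulExpNeg_one]
      exact image_closure_subset_closure_image continuous_mulExpNeg
        ⟨1, by simp [closure_Ico zero_ne_one], rfl⟩
    · rintro _ ⟨x, hx, rfl⟩
      exact summable_treeCoeff_mul_pow (mulExpNeg_mem_Ico hx)
    · rw [← hT', image_image, ← Function.comp_def, hinv.image_eq, image_id]
      exact isLUB_Ico zero_lt_one
  rw [hT']
  exact hsum.tsum_eq
end

section
/- Suppose for each n we have a finite set S_n (of 'symmetries'), a function r: S_n → {0,1,...,n} (number of fixed points), positive integers a_n, f_n with |S_n| related so that Σ_{s ∈ S_n} r(s) = n!·a_n and |S_n| = n!·f_n, and suppose: (i) the proportion of s ∈ S_n with r(s) = 0 is at most ε_n, (ii) the proportion of s ∈ S_n with |r(s) − n/μ| ≥ n^α is at most ε_n (and the same with weights r(s)/(n! a_n)), and (iii) a_n/f_n = n/μ + O(1). Then for every subset E of S_n closed under the relevant equivalence, |Σ_{s∈E} r(s)/(n! a_n) − |E|/(n! f_n)| ≤ 2ε_n + C·n^{α−1}·Σ_{s∈E}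 r(s)/(n! a_n) for some constant C. -/
set_option maxHeartbeats 1000000


open Finset

/-- Abstract comparison lemma underlying `d_TV(F(A_n), F_n) → 0`: given finite sets
`S n` of symmetries with fixed-point counts `r`, satisfying `Σ_s r s = n!·a_n`,
`|S n| = n!·f_n`, exponential bounds on symmetries with `r = 0` or
`|r − n/μ| ≥ n^α` (both under the uniform measure and under the `r`-weighted
measure), and `a_n/f_n = n/μ + O(1)`, the two induced measures of every subset `E`
differ by at most `2·ε_n + C·n^{α−1}·Σ_{s∈E} r s/(n!·a_n)`. -/
theorem abstract_comparison
    (μ α : ℝ) (hμ : 0 < μ) (hα : 1 / 2 < α) (hα1 : α < 1)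
    (S : ℕ → Type) [∀ n, Fintype (S n)] [∀ n, DecidableEq (S n)]
    (r : ∀ n, S n → ℕ) (a f : ℕ → ℕ) (ε : ℕ → ℝ)
    (hr : ∀ n s, r n s ≤ n)
    (ha : ∀ n, 0 < a n) (hf : ∀ n, 0 < f n) (hε : ∀ n, 0 ≤ ε n)
    (hsum : ∀ n, ∑ s : S n, r n s = Nat.factorial n * a n)
    (hcard : ∀ n, Fintype.card (S n) = Nat.factorial n * f n)
    (h0 : ∀ n, (Nat.card {s : S n // r n s = 0} : ℝ) ≤ ε n * Fintype.card (S n))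
    (hconc : ∀ n, (Nat.card {s : S n // (n : ℝ) ^ α ≤ |(r n s : ℝ) - n / μ|} : ℝ) ≤
      ε n * Fintype.card (S n))
    (hconc' : ∀ n, (∑ s ∈ univ.filter (fun s : S n => (n : ℝ) ^ α ≤ |(r n s : ℝ) - n / μ|),
        (r n s : ℝ)) ≤ ε n * (Nat.factorial n * a n))
    (hratio : ∃ C₀ : ℝ, ∀ n ≥ 1, |(a n : ℝ) / f n - n / μ| ≤ C₀) :
    ∃ C > (0 : ℝ), ∀ n ≥ 1, ∀ E : Finset (S n),
      |(∑ s ∈ E, (r n s : ℝ) / (Nat.factorial n * a n)) -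
          E.card / (Nat.factorial n * f n)| ≤
        2 * ε n + C * (n : ℝ) ^ (α - 1) *
          ∑ s ∈ E, (r n s : ℝ) / (Nat.factorial n * a n) := by

  obtain ⟨C₀, hC₀⟩ := hratio
  set C₁ : ℝ := max C₀ 0 with hC₁def
  have hC₁ : (0:ℝ) ≤ C₁ := le_max_right _ _
  have hratio' : ∀ n ≥ 1, |(a n : ℝ) / f n - n / μ| ≤ C₁ :=
    fun n hn => (hC₀ n hn).trans (le_max_left _ _)
  have h1α : (0:ℝ) < 1 - α := by linarith
  have hα0 : (0:ℝ) ≤ α := by linarith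
  have h2μ : (0:ℝ) < 2 * μ := by linarith
  set x₀ : ℝ := (2*μ) ^ ((1-α)⁻¹) with hx₀def
  have hx₀pos : 0 < x₀ := Real.rpow_pos_of_pos h2μ _
  have hx₀pow : x₀ ^ (1-α) = 2*μ := by
    rw [hx₀def, ← Real.rpow_mul h2μ.le, inv_mul_cancel₀ h1α.ne', Real.rpow_one]
  set C : ℝ := max (2*μ*(1+C₁)) ((1 + x₀/μ + C₁)*(2*μ)) + 1 with hCdef
  have hA : (0:ℝ) < 2*μ*(1+C₁) := by nlinarith
  have hApos : (0:ℝ) < C := by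
    have := le_max_left (2*μ*(1+C₁)) ((1 + x₀/μ + C₁)*(2*μ))
    simp only [hCdef]; nlinarith
  refine ⟨C, hApos, ?_⟩
  intro n hn E
  have hn1 : (1:ℝ) ≤ (n:ℝ) := by exact_mod_cast hn
  have hnpos : (0:ℝ) < (n:ℝ) := lt_of_lt_of_le one_pos hn1
  have hfacpos : (0:ℝ) < (Nat.factorial n : ℝ) := by exact_mod_cast n.factorial_pos
  have hapos : (0:ℝ) < (a n : ℝ) := by exact_mod_cast ha n
  have hfpos : (0:ℝ) < (f n : ℝ) := by exact_mod_cast hf n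
  have hNpos : (0:ℝ) < (Nat.factorial n : ℝ) * a n := mul_pos hfacpos hapos
  have hMpos : (0:ℝ) < (Nat.factorial n : ℝ) * f n := mul_pos hfacpos hfpos
  set N : ℝ := (Nat.factorial n : ℝ) * a n with hNdef
  set M : ℝ := (Nat.factorial n : ℝ) * f n with hMdef
  have hQ : (E.card : ℝ) / M = ∑ s ∈ E, 1 / M := by
    rw [Finset.sum_const, nsmul_eq_mul, mul_one_div]
  have htri : |(∑ s ∈ E, (r n s : ℝ) / N) - E.card / M| ≤
      ∑ s ∈ E, |(r n s : ℝ)/N - 1/M| := by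
    rw [hQ, ← Finset.sum_sub_distrib]
    exact Finset.abs_sum_le_sum_abs _ _
  have hPnonneg : (0:ℝ) ≤ ∑ s ∈ E, (r n s : ℝ)/N :=
    Finset.sum_nonneg fun s _ => by positivity
  have hinv : (1:ℝ)/M = ((a n:ℝ)/(f n))/N := by
    rw [hNdef, hMdef]; field_simp
  refine htri.trans ?_
  by_cases h2n : 2*μ ≤ (n:ℝ) ^ (1-α)
  · -- large n case
    set p : S n → Prop := fun s => (n : ℝ) ^ α ≤ |(r n s : ℝ) - n / μ| with hpdef
    rw [← Finset.sum_filter_add_sum_filter_not E p]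
    have hbad : ∑ s ∈ E.filter p, |(r n s : ℝ)/N - 1/M| ≤ 2 * ε n := by
      have step1 : ∑ s ∈ E.filter p, |(r n s : ℝ)/N - 1/M| ≤
          ∑ s ∈ E.filter p, ((r n s : ℝ)/N + 1/M) := by
        refine Finset.sum_le_sum fun s _ => ?_
        have h1 : (0:ℝ) ≤ (r n s : ℝ)/N := by positivity
        have h2 : (0:ℝ) ≤ 1/M := by positivity
        rw [abs_le]; constructor <;> linarith
      rw [Finset.sum_add_distrib] at step1
      have h1 : ∑ s ∈ E.filter p, (r n s : ℝ)/N ≤ ε n := by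
        have hsub : E.filter p ⊆ univ.filter p :=
          Finset.filter_subset_filter _ (Finset.subset_univ E)
        have hle : ∑ s ∈ E.filter p, (r n s : ℝ)/N ≤ ∑ s ∈ univ.filter p, (r n s : ℝ)/N :=
          Finset.sum_le_sum_of_subset_of_nonneg hsub (fun s _ _ => by positivity)
        have heq : ∑ s ∈ univ.filter p, (r n s : ℝ)/N = (∑ s ∈ univ.filter p, (r n s : ℝ))/N :=
          (Finset.sum_div _ _ _).symm
        have hc := hconc' n
        calc ∑ s ∈ E.filter p, (r n s : ℝ)/N ≤ (∑ s ∈ univ.filter p, (r n s : ℝ))/N := by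
              rw [← heq]; exact hle
          _ ≤ (ε n * N)/N := by
              gcongr
          _ = ε n := by field_simp
      have h2 : ∑ s ∈ E.filter p, (1:ℝ)/M ≤ ε n := by
        rw [Finset.sum_const, nsmul_eq_mul, mul_one_div]
        rw [div_le_iff₀ hMpos]
        have hcardle : ((E.filter p).card : ℝ) ≤ ε n * M := by
          have hc := hconc n
          rw [Nat.card_eq_fintype_card, Fintype.card_subtype] at hc
          have hle : (E.filter p).card ≤ (univ.filter p).card :=
            Finset.card_le_card (Finset.filter_subset_filter _ (Finset.subset_univ E))
          calc ((E.filter p).card : ℝ) ≤ ((univ.filter p).card : ℝ) := by exact_mod_cast hle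
            _ ≤ ε n * (Fintype.card (S n)) := hc
            _ = ε n * M := by rw [hcard n, hMdef]; push_cast; ring
        exact hcardle
      linarith
    have hgoodpt : ∀ s ∈ E.filter (fun s => ¬ p s),
        |(r n s : ℝ)/N - 1/M| ≤ (2*μ*(1+C₁)) * (n:ℝ)^(α-1) * ((r n s : ℝ)/N) := by
      intro s hs
      have hps : ¬ p s := (Finset.mem_filter.mp hs).2
      have hlt : |(r n s : ℝ) - n / μ| < (n:ℝ)^α := not_le.mp hps
      have hnα1 : (1:ℝ) ≤ (n:ℝ)^α := by
        calc (1:ℝ) = (1:ℝ)^α := (Real.one_rpow α).symm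
          _ ≤ (n:ℝ)^α := Real.rpow_le_rpow zero_le_one hn1 hα0
      have hαle : (n:ℝ)^α * (2*μ) ≤ n := by
        calc (n:ℝ)^α * (2*μ) ≤ (n:ℝ)^α * (n:ℝ)^(1-α) := by
              exact mul_le_mul_of_nonneg_left h2n (Real.rpow_nonneg hnpos.le α)
          _ = (n:ℝ) := by rw [← Real.rpow_add hnpos]; norm_num
      have hαle' : (n:ℝ)^α ≤ (n:ℝ)/(2*μ) := (le_div_iff₀ h2μ).mpr hαle
      have hsplit : (n:ℝ)/μ - (n:ℝ)/(2*μ) = (n:ℝ)/(2*μ) := by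
        field_simp; ring
      have hrlb : (n:ℝ)/(2*μ) ≤ (r n s : ℝ) := by
        have := (abs_lt.mp hlt).1
        linarith
      have hpowmul : (n:ℝ)^(α-1) * (n:ℝ) = (n:ℝ)^α := by
        nth_rewrite 2 [← Real.rpow_one (n:ℝ)]
        rw [← Real.rpow_add hnpos]; norm_num
      have key : (n:ℝ)^α + C₁ ≤ (2*μ*(1+C₁)) * (n:ℝ)^(α-1) * (r n s : ℝ) := by
        have hpw : (0:ℝ) ≤ (n:ℝ)^(α-1) := Real.rpow_nonneg hnpos.le _
        have step : (2*μ*(1+C₁)) * (n:ℝ)^(α-1) * ((n:ℝ)/(2*μ)) ≤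
            (2*μ*(1+C₁)) * (n:ℝ)^(α-1) * (r n s : ℝ) := by
          apply mul_le_mul_of_nonneg_left hrlb
          positivity
        have hcomp : (2*μ*(1+C₁)) * (n:ℝ)^(α-1) * ((n:ℝ)/(2*μ)) = (1+C₁)*((n:ℝ)^(α-1)*(n:ℝ)) := by
          field_simp
        rw [hcomp, hpowmul] at step
        nlinarith [mul_nonneg hC₁ (by linarith : (0:ℝ) ≤ (n:ℝ)^α - 1)]
      have hdiff : |(r n s : ℝ)/N - 1/M| = |(r n s : ℝ) - (a n:ℝ)/(f n)|/N := by
        rw [hinv, div_sub_div_same, abs_div, abs_of_pos hNpos]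
      rw [hdiff]
      have htri2 : |(r n s : ℝ) - (a n:ℝ)/(f n)| ≤ (n:ℝ)^α + C₁ := by
        calc |(r n s : ℝ) - (a n:ℝ)/(f n)| ≤
            |(r n s : ℝ) - (n:ℝ)/μ| + |(n:ℝ)/μ - (a n:ℝ)/(f n)| := abs_sub_le _ _ _
          _ ≤ (n:ℝ)^α + C₁ := by
              have := hratio' n hn
              rw [abs_sub_comm] at this
              linarith [hlt.le]
      calc |(r n s : ℝ) - (a n:ℝ)/(f n)|/N ≤ ((2*μ*(1+C₁)) * (n:ℝ)^(α-1) * (r n s : ℝ))/N := by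
            gcongr
            exact htri2.trans key
        _ = (2*μ*(1+C₁)) * (n:ℝ)^(α-1) * ((r n s : ℝ)/N) := by ring
    have hgood : ∑ s ∈ E.filter (fun s => ¬ p s), |(r n s : ℝ)/N - 1/M| ≤
        C * (n:ℝ)^(α-1) * ∑ s ∈ E, (r n s : ℝ)/N := by
      have hpw : (0:ℝ) ≤ (n:ℝ)^(α-1) := Real.rpow_nonneg hnpos.le _
      calc ∑ s ∈ E.filter (fun s => ¬ p s), |(r n s : ℝ)/N - 1/M|
          ≤ ∑ s ∈ E.filter (fun s => ¬ p s), (2*μ*(1+C₁)) * (n:ℝ)^(α-1) * ((r n s : ℝ)/N) :=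
            Finset.sum_le_sum hgoodpt
        _ = (2*μ*(1+C₁)) * (n:ℝ)^(α-1) * ∑ s ∈ E.filter (fun s => ¬ p s), (r n s : ℝ)/N := by
            rw [Finset.mul_sum]
        _ ≤ (2*μ*(1+C₁)) * (n:ℝ)^(α-1) * ∑ s ∈ E, (r n s : ℝ)/N := by
            apply mul_le_mul_of_nonneg_left ?_ (by positivity)
            exact Finset.sum_le_sum_of_subset_of_nonneg (Finset.filter_subset _ _)
              (fun s _ _ => by positivity)
        _ ≤ C * (n:ℝ)^(α-1) * ∑ s ∈ E, (r n s : ℝ)/N := by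
            apply mul_le_mul_of_nonneg_right ?_ hPnonneg
            apply mul_le_mul_of_nonneg_right ?_ hpw
            have := le_max_left (2*μ*(1+C₁)) ((1 + x₀/μ + C₁)*(2*μ))
            simp only [hCdef]; linarith
    linarith
  · -- small n case
    push_neg at h2n
    have hnx₀ : (n:ℝ) ≤ x₀ := by
      by_contra h
      push_neg at h
      have := Real.rpow_le_rpow hx₀pos.le h.le h1α.le
      rw [hx₀pow] at this
      linarith
    set q : S n → Prop := fun s => r n s = 0 with hqdef
    rw [← Finset.sum_filter_add_sum_filter_not E q]
    have hzero : ∑ s ∈ E.filter q, |(r n s : ℝ)/N - 1/M| ≤ 2 * ε n := by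
      have heq : ∑ s ∈ E.filter q, |(r n s : ℝ)/N - 1/M| = ∑ s ∈ E.filter q, (1:ℝ)/M := by
        refine Finset.sum_congr rfl fun s hs => ?_
        have hq : r n s = 0 := (Finset.mem_filter.mp hs).2
        rw [hq]
        simp only [Nat.cast_zero, zero_div, zero_sub, abs_neg]
        exact abs_of_pos (by positivity)
      rw [heq, Finset.sum_const, nsmul_eq_mul, mul_one_div, div_le_iff₀ hMpos]
      have hc := h0 n
      rw [Nat.card_eq_fintype_card, Fintype.card_subtype] at hc
      have hle : (E.filter q).card ≤ (univ.filter (fun s => r n s = 0)).card :=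
        Finset.card_le_card (Finset.filter_subset_filter _ (Finset.subset_univ E))
      have : ((E.filter q).card : ℝ) ≤ ε n * (Fintype.card (S n)) := by
        calc ((E.filter q).card : ℝ) ≤ ((univ.filter (fun s => r n s = 0)).card : ℝ) := by
              exact_mod_cast hle
          _ ≤ ε n * (Fintype.card (S n)) := hc
      have hM' : ε n * (Fintype.card (S n) : ℝ) = ε n * M := by
        rw [hcard n, hMdef]; push_cast; ring
      have hεn := hε n
      nlinarith [this, hMpos]
    have hpospt : ∀ s ∈ E.filter (fun s => ¬ q s),
        |(r n s : ℝ)/N - 1/M| ≤ C * (n:ℝ)^(α-1) * ((r n s : ℝ)/N) := by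
      intro s hs
      have hqs : ¬ (r n s = 0) := (Finset.mem_filter.mp hs).2
      have hr1 : (1:ℝ) ≤ (r n s : ℝ) := by
        have : 1 ≤ r n s := Nat.one_le_iff_ne_zero.mpr hqs
        exact_mod_cast this
      have haf_nn : (0:ℝ) ≤ (a n:ℝ)/(f n) := by positivity
      have haf_ub : (a n:ℝ)/(f n) ≤ (n:ℝ)/μ + C₁ := by
        have := (abs_le.mp (hratio' n hn)).2
        linarith
      have hconst : (1 + (n:ℝ)/μ + C₁) ≤ C * (n:ℝ)^(α-1) := by
        have hpow : (n:ℝ)^(α-1) = ((n:ℝ)^(1-α))⁻¹ := by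
          rw [← Real.rpow_neg hnpos.le, neg_sub]
        have htpos : (0:ℝ) < (n:ℝ)^(1-α) := Real.rpow_pos_of_pos hnpos _
        rw [hpow, ← div_eq_mul_inv, le_div_iff₀ htpos]
        have hnd : (n:ℝ)/μ ≤ x₀/μ := by
          gcongr
        have h1 : (1 + (n:ℝ)/μ + C₁) * (n:ℝ)^(1-α) ≤ (1 + (n:ℝ)/μ + C₁) * (2*μ) := by
          apply mul_le_mul_of_nonneg_left h2n.le
          have : (0:ℝ) ≤ (n:ℝ)/μ := by positivity
          linarith
        have h2 : (1 + (n:ℝ)/μ + C₁) * (2*μ) ≤ (1 + x₀/μ + C₁) * (2*μ) := by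
          apply mul_le_mul_of_nonneg_right ?_ h2μ.le
          linarith
        have h3 : (1 + x₀/μ + C₁)*(2*μ) ≤ C := by
          have := le_max_right (2*μ*(1+C₁)) ((1 + x₀/μ + C₁)*(2*μ))
          simp only [hCdef]; linarith
        linarith
      have hstep : |(r n s : ℝ)/N - 1/M| ≤ (1 + (n:ℝ)/μ + C₁) * ((r n s : ℝ)/N) := by
        have h1M : (1:ℝ)/M ≤ ((n:ℝ)/μ + C₁) * ((r n s : ℝ)/N) := by
          rw [hinv]
          calc ((a n:ℝ)/(f n))/N ≤ ((n:ℝ)/μ + C₁)/N := by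
                gcongr
            _ = ((n:ℝ)/μ + C₁) * (1/N) := by ring
            _ ≤ ((n:ℝ)/μ + C₁) * ((r n s : ℝ)/N) := by
                apply mul_le_mul_of_nonneg_left ?_ (by linarith [haf_ub, haf_nn] : (0:ℝ) ≤ (n:ℝ)/μ + C₁)
                gcongr
        have hrN : (0:ℝ) ≤ (r n s : ℝ)/N := by positivity
        have h1Mpos : (0:ℝ) < 1/M := by positivity
        rw [abs_le]; constructor <;> nlinarith
      calc |(r n s : ℝ)/N - 1/M| ≤ (1 + (n:ℝ)/μ + C₁) * ((r n s : ℝ)/N) := hstep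
        _ ≤ C * (n:ℝ)^(α-1) * ((r n s : ℝ)/N) := by
            apply mul_le_mul_of_nonneg_right hconst (by positivity)
    have hpos : ∑ s ∈ E.filter (fun s => ¬ q s), |(r n s : ℝ)/N - 1/M| ≤
        C * (n:ℝ)^(α-1) * ∑ s ∈ E, (r n s : ℝ)/N := by
      calc ∑ s ∈ E.filter (fun s => ¬ q s), |(r n s : ℝ)/N - 1/M|
          ≤ ∑ s ∈ E.filter (fun s => ¬ q s), C * (n:ℝ)^(α-1) * ((r n s : ℝ)/N) :=
            Finset.sum_le_sum hpospt
        _ = C * (n:ℝ)^(α-1) * ∑ s ∈ E.filter (fun s => ¬ q s), (r n s : ℝ)/N := by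
            rw [Finset.mul_sum]
        _ ≤ C * (n:ℝ)^(α-1) * ∑ s ∈ E, (r n s : ℝ)/N := by
            apply mul_le_mul_of_nonneg_left ?_ ?_
            · exact Finset.sum_le_sum_of_subset_of_nonneg (Finset.filter_subset _ _)
                (fun s _ _ => by positivity)
            · have hpw : (0:ℝ) ≤ (n:ℝ)^(α-1) := Real.rpow_nonneg hnpos.le _
              positivity
    linarith
end
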